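/- arXiv:1401.7943 — 3 statements merged into one kernel-verified Lean document; each statement's English description precedes it below -/
import Mathlib

section
/- For Legendre polynomials, ∫_{-1}^{1} (L_m'(x))^2 dx = m(m+1) for all m ≥ 0. -/
open Polynomial intervalIntegral

/-- The Legendre polynomials, defined by the standard three-term recurrence
`L₀ = 1`, `L₁ = x`, `(m+1) L_{m+1} = (2m+1) x L_m - m L_{m-1}`. -/
noncomputable def L : ℕ → Polynomial ℝ
  | 0 => 1
  | 1 => X
  | (m+2) => Polynomial.C ((2*(m:ℝ)+3)/((m:ℝ)+2)) * (X * L (m+1)) -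
      Polynomial.C (((m:ℝ)+1)/((m:ℝ)+2)) * L m

open MeasureTheory

lemma Lrec (m : ℕ) : L (m+2) = C ((2*(m:ℝ)+3)/((m:ℝ)+2)) * (X * L (m+1)) -
      C (((m:ℝ)+1)/((m:ℝ)+2)) * L m := rfl

lemma cast_ne (m : ℕ) : ((m:ℝ)+2) ≠ 0 := by positivity

lemma Lev (m : ℕ) (x : ℝ) : eval x (L (m+2)) =
    (2*(m:ℝ)+3)/((m:ℝ)+2) * (x * eval x (L (m+1))) - ((m:ℝ)+1)/((m:ℝ)+2) * eval x (L m) := by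
  rw [Lrec]; simp

lemma dLE (m : ℕ) (x : ℝ) : eval x (derivative (L (m+2))) =
    (2*(m:ℝ)+3)/((m:ℝ)+2) * (eval x (L (m+1)) + x * eval x (derivative (L (m+1)))) -
    ((m:ℝ)+1)/((m:ℝ)+2) * eval x (derivative (L m)) := by
  rw [Lrec]; simp [derivative_mul]

lemma PQ (m : ℕ) :
    (∀ x : ℝ, eval x (derivative (L (m+1))) =
      x * eval x (derivative (L m)) + ((m:ℝ)+1) * eval x (L m)) ∧
    (∀ x : ℝ, x * eval x (derivative (L (m+1))) =
      eval x (derivative (L m)) + ((m:ℝ)+1) * eval x (L (m+1))) := by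
  induction m with
  | zero => constructor <;> intro x <;> simp [L]
  | succ m ih =>
    obtain ⟨hP, hQ⟩ := ih
    have h2 := cast_ne m
    constructor
    · intro x
      rw [dLE]
      push_cast
      field_simp
      linear_combination (((m:ℝ)+1)) * hQ x
    · intro x
      rw [dLE, show (m+1+1)=m+2 from rfl, Lev]
      push_cast
      field_simp
      linear_combination (-(m:ℝ)-2) * hP x + (2*(m:ℝ)+3) * x * hQ x

lemma dA (m : ℕ) : derivative (L (m+2)) = derivative (L m) + C (2*(m:ℝ)+3) * L (m+1) := by
  apply Polynomial.funext
  intro x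
  have h2 := cast_ne m
  have hQ := (PQ m).2 x
  rw [dLE]
  simp only [eval_add, eval_mul, eval_C]
  field_simp
  linear_combination (2*(m:ℝ)+3) * hQ

lemma bonnetP (m : ℕ) : C (2*(m:ℝ)+3) * (X * L (m+1)) =
    C ((m:ℝ)+2) * L (m+2) + C ((m:ℝ)+1) * L m := by
  apply Polynomial.funext
  intro x
  have h2 := cast_ne m
  simp only [eval_add, eval_mul, eval_C, eval_X, Lev]
  field_simp
  ring

lemma Lneg (m : ℕ) : (∀ x : ℝ, eval (-x) (L m) = (-1)^m * eval x (L m)) ∧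
    (∀ x : ℝ, eval (-x) (L (m+1)) = (-1)^(m+1) * eval x (L (m+1))) := by
  induction m with
  | zero => constructor <;> intro x <;> simp [L]
  | succ m ih =>
    obtain ⟨h0, h1⟩ := ih
    refine ⟨h1, fun x => ?_⟩
    rw [show (m+1+1)=m+2 from rfl, Lev, Lev, h0, h1]
    ring

lemma Lone (m : ℕ) : (eval 1 (L m) = 1) ∧ (eval 1 (L (m+1)) = 1) := by
  induction m with
  | zero => constructor <;> simp [L]
  | succ m ih =>
    obtain ⟨h0, h1⟩ := ih
    refine ⟨h1, ?_⟩
    rw [show (m+1+1)=m+2 from rfl, Lev, h0, h1]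
    field_simp
    ring

lemma Lnegone (m : ℕ) : eval (-1 : ℝ) (L m) = (-1)^m := by
  have := (Lneg m).1 1
  rw [(Lone m).1] at this
  simpa using this

noncomputable def Iv (p : Polynomial ℝ) : ℝ := ∫ x in (-1:ℝ)..1, ((p.eval x : ℝ))

lemma ii (p : Polynomial ℝ) : IntervalIntegrable (fun x => p.eval x) volume (-1:ℝ) 1 :=
  p.continuous.intervalIntegrable _ _

lemma Iv_add (p q : Polynomial ℝ) : Iv (p + q) = Iv p + Iv q := by
  unfold Iv; simp only [eval_add]
  exact integral_add (ii p) (ii q)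

lemma Iv_sub (p q : Polynomial ℝ) : Iv (p - q) = Iv p - Iv q := by
  unfold Iv; simp only [eval_sub]
  exact integral_sub (ii p) (ii q)

lemma Iv_Cmul (a : ℝ) (p : Polynomial ℝ) : Iv (C a * p) = a * Iv p := by
  unfold Iv; simp only [eval_mul, eval_C]
  exact integral_const_mul a _

lemma Iv_one : Iv 1 = 2 := by unfold Iv; simp; norm_num

lemma Iv_X : Iv X = 0 := by unfold Iv; simp

lemma Iv_XX : Iv (X*X) = 2/3 := by
  unfold Iv; simp only [eval_mul, eval_X, ← sq]
  simp only [eval_pow, eval_X]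
  norm_num

lemma Iv_sym (p q : Polynomial ℝ) : Iv (p * q) = Iv (q * p) := by rw [mul_comm]

lemma Iv_odd (p : Polynomial ℝ) (h : ∀ x : ℝ, eval (-x) p = - eval x p) : Iv p = 0 := by
  have h1 : (∫ x in (-1:ℝ)..1, eval (-x) p) = ∫ x in (-1:ℝ)..1, eval x p := by
    simpa using integral_comp_neg (a := (-1:ℝ)) (b := 1) (fun x => eval x p)
  simp only [h] at h1
  rw [intervalIntegral.integral_neg] at h1
  have : Iv p = ∫ x in (-1:ℝ)..1, eval x p := rfl
  linarith [this, h1]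

lemma ibp (p q : Polynomial ℝ) : Iv (derivative p * q + p * derivative q) =
    eval 1 p * eval 1 q - eval (-1) p * eval (-1) q := by
  unfold Iv
  rw [integral_eq_sub_of_hasDerivAt (f := fun y => eval y p * eval y q)
    (fun x _ => by
      simpa [eval_add, eval_mul, Pi.mul_def] using (p.hasDerivAt x).mul (q.hasDerivAt x))
    (ii _)]

lemma L0 : L 0 = 1 := rfl
lemma L1 : L 1 = X := rfl

lemma bonnet_Iv (m : ℕ) (r : Polynomial ℝ) :
    (2*(m:ℝ)+3) * Iv (X * (L (m+1) * r)) =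
    ((m:ℝ)+2) * Iv (L (m+2) * r) + ((m:ℝ)+1) * Iv (L m * r) := by
  have e := congrArg (fun p => Iv (p * r)) (bonnetP m)
  simp only [add_mul, mul_assoc] at e
  rw [Iv_add, Iv_Cmul, Iv_Cmul, Iv_Cmul] at e
  exact e

lemma deriv_orth (b : ℕ) : ∀ a : ℕ,
    ((∀ k, k < a → Iv (L k * L b) = 0) → Iv (derivative (L a) * L b) = 0) ∧
    ((∀ k, k < a+1 → Iv (L k * L b) = 0) → Iv (derivative (L (a+1)) * L b) = 0) := by
  intro a
  induction a with
  | zero =>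
    constructor
    · intro _; rw [L0]; simp only [derivative_one, zero_mul]
      unfold Iv; simp
    · intro h; rw [L1, derivative_X, ← L0]
      exact h 0 (by norm_num)
  | succ a ih =>
    obtain ⟨h0, h1⟩ := ih
    refine ⟨h1, fun h => ?_⟩
    rw [show a+1+1 = a+2 from rfl, dA a, add_mul, Iv_add, mul_assoc, Iv_Cmul]
    rw [h0 (fun k hk => h k (by omega)), h (a+1) (by omega)]
    ring

lemma diag (m : ℕ) (h1 : ∀ n, n < m → Iv (L m * L n) = 0)
    (h2 : ∀ n, n < m+1 → Iv (L (m+1) * L n) = 0) :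
    (2*(m:ℝ)+1) * Iv (L m * L m) = 2 := by
  have hibp := ibp (L m) (L (m+1))
  rw [Iv_add] at hibp
  rw [(Lone m).1, (Lone m).2, Lnegone, Lnegone] at hibp
  have hT1 : Iv (derivative (L m) * L (m+1)) = 0 :=
    (deriv_orth (m+1) m).1 (fun k hk => by
      rw [Iv_sym]; exact h2 k (by omega))
  have hpow : ((-1:ℝ))^m * (-1)^(m+1) = -1 := by
    rw [← pow_add]
    exact Odd.neg_one_pow ⟨m, by ring⟩
  rw [hT1] at hibp
  -- hibp : 0 + Iv (L m * derivative (L (m+1))) = 1*1 - (-1)^m * (-1)^(m+1)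
  have hibp' : Iv (L m * derivative (L (m+1))) = 2 := by
    rw [zero_add] at hibp
    rw [hibp]
    linear_combination - hpow
  rw [Iv_sym] at hibp'
  cases m with
  | zero =>
    simp only [Nat.cast_zero, L0, mul_one]
    rw [Iv_one]; norm_num
  | succ c =>
    rw [show c+1+1 = c+2 from rfl, dA c, add_mul, Iv_add, mul_assoc, Iv_Cmul] at hibp'
    have : Iv (derivative (L c) * L (c+1)) = 0 :=
      (deriv_orth (c+1) c).1 (fun k hk => by
        rw [Iv_sym]; exact h1 k (by omega))
    rw [this, zero_add] at hibp'
    push_cast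
    linear_combination hibp'

lemma comm3 (p q : Polynomial ℝ) : Iv (X * (p * q)) = Iv (X * (q * p)) := by
  rw [mul_comm p q]

lemma Off : ∀ m n : ℕ, n < m → Iv (L m * L n) = 0 := by
  intro m
  induction m using Nat.strong_induction_on with
  | _ m ih =>
  match m, ih with
  | 0, _ => exact fun n hn => absurd hn (by omega)
  | 1, _ =>
    intro n hn
    interval_cases n
    rw [L1, L0, mul_one, Iv_X]
  | (m+2), ih =>
    intro n hn
    have hlow : ∀ k, k < m → Iv (L (m+2) * L k) = 0 := by
      intro k hk
      have hK : Iv (X * (L (m+1) * L k)) = 0 := by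
        rw [comm3]
        match k, hk with
        | 0, hk =>
          rw [L0, one_mul, show (X : Polynomial ℝ) = L 1 from rfl, Iv_sym]
          exact ih (m+1) (by omega) 1 (by omega)
        | (j+1), hk =>
          have hb := bonnet_Iv j (L (m+1))
          rw [Iv_sym (L (j+2)), Iv_sym (L j)] at hb
          rw [ih (m+1) (by omega) (j+2) (by omega), ih (m+1) (by omega) j (by omega)] at hb
          have h3 : (2*(j:ℝ)+3) ≠ 0 := by positivity
          have : (2*(j:ℝ)+3) * Iv (X * (L (j+1) * L (m+1))) = 0 := by linarith
          exact (mul_eq_zero.mp this).resolve_left h3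
      have hb2 := bonnet_Iv m (L k)
      rw [hK, ih m (by omega) k hk] at hb2
      have h2 := cast_ne m
      have : ((m:ℝ)+2) * Iv (L (m+2) * L k) = 0 := by linarith
      exact (mul_eq_zero.mp this).resolve_left h2
    rcases lt_trichotomy n m with h | h | h
    · exact hlow n h
    · subst h
      obtain _ | c := n
      · have h20 : L 2 * L 0 = C ((3:ℝ)/2) * (X*X) - C ((1:ℝ)/2) * 1 := by
          rw [show L 2 = L (0+2) from rfl, Lrec, L1, L0]
          norm_num
        rw [h20, Iv_sub, Iv_Cmul, Iv_Cmul, Iv_XX, Iv_one]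
        norm_num
      · -- goal : Iv (L (c+1+2) * L (c+1)) = 0
        show Iv (L (c+3) * L (c+1)) = 0
        have hlow' : ∀ k, k < c+1 → Iv (L (c+3) * L k) = 0 := hlow
        have ih' : ∀ k, k < c+3 → ∀ j, j < k → Iv (L k * L j) = 0 := ih
        clear hlow ih hn
        have hd0 := diag (c+1) (fun k hk => ih' (c+1) (by omega) k hk)
          (fun k hk => ih' (c+2) (by omega) k hk)
        push_cast at hd0
        -- hd0 : (2*(c+1)+1) * Iv (L (c+1) * L (c+1)) = 2
        have eq1 := bonnet_Iv c (L (c+2))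
        rw [Iv_sym (L c) (L (c+2)), ih' (c+2) (by omega) c (by omega)] at eq1
        have eq2 : (2*((c:ℝ)+1)+3) * Iv (X * (L (c+2) * L (c+1))) =
            ((c:ℝ)+1+2) * Iv (L (c+3) * L (c+1)) + ((c:ℝ)+1+1) * Iv (L (c+1) * L (c+1)) := by
          have h := bonnet_Iv (c+1) (L (c+1))
          push_cast at h
          rw [show c+1+1 = c+2 by omega, show c+1+2 = c+3 by omega] at h
          exact h
        rw [comm3 (L (c+2)) (L (c+1))] at eq2
        have hdo1 : Iv (derivative (L c) * L (c+3)) = 0 :=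
          (deriv_orth (c+3) c).1 (fun k hk => by rw [Iv_sym]; exact hlow' k (by omega))
        have hdo2 : Iv (derivative (L (c+1)) * L (c+2)) = 0 :=
          (deriv_orth (c+2) (c+1)).1 (fun k hk => by
            rw [Iv_sym]; exact ih' (c+2) (by omega) k (by omega))
        have dA3 : derivative (L (c+3)) =
            derivative (L (c+1)) + C (2*(((c+1):ℕ):ℝ)+3) * L (c+2) := by
          have h := dA (c+1)
          rw [show c+1+2 = c+3 by omega, show c+1+1 = c+2 by omega] at h
          exact h
        have hA1 : Iv (derivative (L (c+2)) * L (c+3)) =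
            (2*(c:ℝ)+3) * Iv (L (c+3) * L (c+1)) := by
          rw [dA c, add_mul, Iv_add, mul_assoc, Iv_Cmul, hdo1, zero_add,
            Iv_sym (L (c+1)) (L (c+3))]
        have hA2 : Iv (L (c+2) * derivative (L (c+3))) =
            (2*(((c+1):ℕ):ℝ)+3) * Iv (L (c+2) * L (c+2)) := by
          rw [Iv_sym, dA3, add_mul, Iv_add, mul_assoc, Iv_Cmul, hdo2, zero_add]
        have lone2 : eval (1:ℝ) (L (c+2)) = 1 := (Lone (c+2)).1
        have lone3 : eval (1:ℝ) (L (c+3)) = 1 := (Lone (c+2)).2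
        have hibp := ibp (L (c+2)) (L (c+3))
        rw [Iv_add, hA1, hA2, lone2, lone3, Lnegone, Lnegone] at hibp
        have hpow : ((-1:ℝ))^(c+2) * (-1)^(c+3) = -1 := by
          rw [← pow_add]
          exact Odd.neg_one_pow ⟨c+2, by ring⟩
        have hx : ((2*(c:ℝ)+3) * (2*(c:ℝ)+5)) * Iv (L (c+3) * L (c+1)) = 0 := by
          push_cast at hibp
          linear_combination (2*(c:ℝ)+5) * eq1 - (2*(c:ℝ)+3) * eq2 +
            ((c:ℝ)+2) * hibp - ((c:ℝ)+2) * hd0 - ((c:ℝ)+2) * hpow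
        have hne : ((2*(c:ℝ)+3) * (2*(c:ℝ)+5)) ≠ 0 := by positivity
        exact (mul_eq_zero.mp hx).resolve_left hne
    · have hn1 : n = m+1 := by omega
      subst hn1
      apply Iv_odd
      intro x
      rw [eval_mul, eval_mul, (Lneg (m+2)).1 x, (Lneg (m+1)).1 x]
      have hpow : ((-1:ℝ))^(m+2) * (-1)^(m+1) = -1 := by
        rw [← pow_add]
        exact Odd.neg_one_pow ⟨m+1, by ring⟩
      linear_combination (eval x (L (m+2)) * eval x (L (m+1))) * hpow

theorem legendre_deriv_sq_integral (m : ℕ) :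
    ∫ x in (-1:ℝ)..1, ((Polynomial.derivative (L m)).eval x)^2 = (m:ℝ)*(m+1) := by
  have key : ∀ k : ℕ, Iv (derivative (L k) * derivative (L k)) = (k:ℝ)*((k:ℝ)+1) := by
    have key2 : ∀ k : ℕ, Iv (derivative (L k) * derivative (L k)) = (k:ℝ)*((k:ℝ)+1) ∧
        Iv (derivative (L (k+1)) * derivative (L (k+1))) = ((k:ℝ)+1)*((k:ℝ)+2) := by
      intro k
      induction k with
      | zero =>
        constructor
        · rw [L0, derivative_one]
          unfold Iv; simp
        · rw [L1, derivative_X, mul_one, Iv_one]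
          norm_num
      | succ k ih =>
        obtain ⟨h0, h1⟩ := ih
        refine ⟨by push_cast; convert h1 using 2 <;> push_cast <;> ring, ?_⟩
        rw [show k+1+1 = k+2 from rfl, dA k]
        have expand : (derivative (L k) + C (2*(k:ℝ)+3) * L (k+1)) *
            (derivative (L k) + C (2*(k:ℝ)+3) * L (k+1)) =
            derivative (L k) * derivative (L k) +
            C (2*(k:ℝ)+3) * (derivative (L k) * L (k+1)) +
            (C (2*(k:ℝ)+3) * (L (k+1) * derivative (L k)) +
            C (2*(k:ℝ)+3) * (C (2*(k:ℝ)+3) * (L (k+1) * L (k+1)))) := by ring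
        rw [expand, Iv_add, Iv_add, Iv_add, Iv_Cmul, Iv_Cmul, Iv_Cmul, Iv_Cmul]
        have horth : Iv (derivative (L k) * L (k+1)) = 0 :=
          (deriv_orth (k+1) k).1 (fun j hj => by
            rw [Iv_sym]; exact Off (k+1) j (by omega))
        have horth2 : Iv (L (k+1) * derivative (L k)) = 0 := by
          rw [Iv_sym]; exact horth
        have hd := diag (k+1) (fun n hn => Off (k+1) n hn) (fun n hn => Off (k+2) n hn)
        push_cast at hd ⊢
        rw [h0, horth, horth2]
        linear_combination (2*(k:ℝ)+3) * hd
    exact fun k => (key2 k).1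
  have hk := key m
  have : ∀ x : ℝ, (eval x (derivative (L m)))^2 =
      eval x (derivative (L m) * derivative (L m)) := by
    intro x; rw [eval_mul, sq]
  calc ∫ x in (-1:ℝ)..1, ((Polynomial.derivative (L m)).eval x)^2
      = Iv (derivative (L m) * derivative (L m)) := by
        unfold Iv; simp only [this]
    _ = (m:ℝ)*((m:ℝ)+1) := hk
end

section
/- For any integer p ≥ 3, the orthogonal complement (with respect to the L^2(-1,1) inner product) of the subspace (1-x^2)·P_{p-3} inside the space P_p of polynomials of degree ≤ p equals the linear span of {L_p, L_p', L_{p-1}'}, where L_m denotes the m-th Legendre polynomial. -/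
open Polynomial intervalIntegral

namespace LegendreAux

open MeasureTheory

noncomputable def Pint (P : Polynomial ℝ) : ℝ := ∫ x in (-1:ℝ)..1, P.eval x

lemma pii (P : Polynomial ℝ) (a b : ℝ) : IntervalIntegrable (fun x => P.eval x) volume a b :=
  (P.continuous_aeval).intervalIntegrable a b

lemma Pint_add (P Q : Polynomial ℝ) : Pint (P + Q) = Pint P + Pint Q := by
  unfold Pint
  simp only [eval_add]
  exact intervalIntegral.integral_add (pii P _ _) (pii Q _ _)

lemma Pint_sub (P Q : Polynomial ℝ) : Pint (P - Q) = Pint P - Pint Q := by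
  unfold Pint
  simp only [eval_sub]
  exact intervalIntegral.integral_sub (pii P _ _) (pii Q _ _)

lemma Pint_Cmul (c : ℝ) (P : Polynomial ℝ) : Pint (C c * P) = c * Pint P := by
  unfold Pint
  simp only [eval_mul, eval_C]
  exact intervalIntegral.integral_const_mul c _

lemma Pint_deriv (P : Polynomial ℝ) :
    Pint (derivative P) = P.eval 1 - P.eval (-1) := by
  unfold Pint
  have : ∀ x ∈ Set.uIcc (-1:ℝ) 1, HasDerivAt (fun y => P.eval y) ((derivative P).eval x) x :=
    fun x _ => P.hasDerivAt x
  have h := intervalIntegral.integral_eq_sub_of_hasDerivAt this (pii (derivative P) _ _)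
  simpa using h

lemma L_rec (m : ℕ) : C ((m:ℝ)+2) * L (m+2) =
    C (2*(m:ℝ)+3) * (X * L (m+1)) - C ((m:ℝ)+1) * L m := by
  have h2 : ((m:ℝ)+2) ≠ 0 := by positivity
  have e1 : C ((m:ℝ)+2) * C ((2*(m:ℝ)+3)/((m:ℝ)+2)) = C (2*(m:ℝ)+3) := by
    rw [← C_mul]; congr 1; field_simp
  have e2 : C ((m:ℝ)+2) * C (((m:ℝ)+1)/((m:ℝ)+2)) = C ((m:ℝ)+1) := by
    rw [← C_mul]; congr 1; field_simp
  simp only [L]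
  linear_combination (X * L (m+1)) * e1 - L m * e2

lemma LBC : ∀ n : ℕ,
    (X * derivative (L (n+1)) = derivative (L n) + C ((n:ℝ)+1) * L (n+1)) ∧
    (derivative (L (n+1)) = X * derivative (L n) + C ((n:ℝ)+1) * L n) := by
  intro n
  induction n with
  | zero =>
      have l0 : L 0 = 1 := rfl
      have l1 : L (0+1) = X := rfl
      rw [l0, l1]
      constructor <;> simp
  | succ n ih =>
      obtain ⟨hB, hC⟩ := ih
      have h2 : ((n:ℝ)+2) ≠ 0 := by positivity
      have key : (C ((n:ℝ)+2) : Polynomial ℝ) ≠ 0 := by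
        exact Polynomial.C_ne_zero.mpr h2
      have hd := congrArg derivative (L_rec n)
      simp only [derivative_mul, derivative_sub, derivative_C, derivative_X, zero_mul,
        zero_add, one_mul] at hd
      have hrec := L_rec n
      constructor
      · apply mul_left_cancel₀ key
        push_cast
        simp only [map_add, map_mul, map_ofNat, map_one] at hd hB hC hrec ⊢
        linear_combination X * hd - (C (n:ℝ)+2) * hrec + (2*C (n:ℝ)+3) * X * hB - (C (n:ℝ)+2) * hC
      · apply mul_left_cancel₀ key
        push_cast
        simp only [map_add, map_mul, map_ofNat, map_one] at hd hB ⊢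
        linear_combination hd + (C (n:ℝ)+1) * hB

lemma L_ode (n : ℕ) : derivative ((1 - X^2) * derivative (L (n+1))) =
    C (-(((n:ℝ)+1) * ((n:ℝ)+2))) * L (n+1) := by
  obtain ⟨hB, hC⟩ := LBC n
  have hA : (1 - X^2) * derivative (L (n+1)) = C ((n:ℝ)+1) * (L n - X * L (n+1)) := by
    linear_combination hC - X * hB
  rw [hA]
  simp only [derivative_mul, derivative_sub, derivative_C, derivative_X, derivative_X_pow,
    derivative_one, zero_mul, zero_add, zero_sub, one_mul]
  simp only [map_add, map_mul, map_ofNat, map_one, map_neg] at hB ⊢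
  linear_combination (-(C (n:ℝ)+1)) * hB

lemma L_eval_one : ∀ n : ℕ, (L n).eval 1 = 1 := by
  intro n
  induction n using Nat.strong_induction_on with
  | _ n ih =>
    match n with
    | 0 => simp [L]
    | 1 => simp [L]
    | (m+2) =>
      have h1 := ih (m+1) (by omega)
      have h0 := ih m (by omega)
      have h2 : ((m:ℝ)+2) ≠ 0 := by positivity
      show eval 1 (Polynomial.C ((2*(m:ℝ)+3)/((m:ℝ)+2)) * (X * L (m+1)) -
        Polynomial.C (((m:ℝ)+1)/((m:ℝ)+2)) * L m) = 1
      simp only [eval_sub, eval_mul, eval_C, eval_X, h1, h0]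
      field_simp
      ring

lemma L_eval_negone : ∀ n : ℕ, (L n).eval (-1) = (-1)^n := by
  intro n
  induction n using Nat.strong_induction_on with
  | _ n ih =>
    match n with
    | 0 => simp [L]
    | 1 => simp [L]
    | (m+2) =>
      have h1 := ih (m+1) (by omega)
      have h0 := ih m (by omega)
      have h2 : ((m:ℝ)+2) ≠ 0 := by positivity
      show eval (-1) (Polynomial.C ((2*(m:ℝ)+3)/((m:ℝ)+2)) * (X * L (m+1)) -
        Polynomial.C (((m:ℝ)+1)/((m:ℝ)+2)) * L m) = (-1)^(m+2)
      simp only [eval_sub, eval_mul, eval_C, eval_X, h1, h0]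
      rw [pow_succ, pow_succ]
      field_simp
      ring

lemma dL_eval_one : ∀ n : ℕ, (derivative (L n)).eval 1 = (n:ℝ) * ((n:ℝ)+1) / 2 := by
  intro n
  induction n with
  | zero => simp [L]
  | succ n ih =>
    have hB := (LBC n).1
    have := congrArg (eval 1) hB
    simp only [eval_mul, eval_add, eval_X, eval_C, one_mul, ih, L_eval_one] at this
    rw [this]; push_cast; ring

lemma dL_eval_negone : ∀ n : ℕ,
    (derivative (L n)).eval (-1) = (-1)^(n+1) * ((n:ℝ) * ((n:ℝ)+1) / 2) := by
  intro n
  induction n with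
  | zero => simp [L]
  | succ n ih =>
    have hB := (LBC n).1
    have := congrArg (eval (-1)) hB
    simp only [eval_mul, eval_add, eval_X, eval_C, ih, L_eval_negone] at this
    have h : (derivative (L (n+1))).eval (-1) =
        -((-1)^(n+1) * ((n:ℝ) * ((n:ℝ)+1) / 2)) - ((n:ℝ)+1) * (-1)^(n+1) := by
      linarith [this]
    rw [h, pow_succ]
    push_cast; ring

lemma L_deg : ∀ n : ℕ, (L n).natDegree = n ∧ (L n).coeff n ≠ 0 := by
  intro n
  induction n using Nat.strong_induction_on with
  | _ n ih =>
    match n with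
    | 0 => constructor <;> simp [L]
    | 1 => constructor <;> simp [L]
    | (m+2) =>
      obtain ⟨hd1, hc1⟩ := ih (m+1) (by omega)
      obtain ⟨hd0, hc0⟩ := ih m (by omega)
      have h2 : ((m:ℝ)+2) ≠ 0 := by positivity
      have ha : (2*(m:ℝ)+3)/((m:ℝ)+2) ≠ 0 := by positivity
      have hL : L (m+2) = Polynomial.C ((2*(m:ℝ)+3)/((m:ℝ)+2)) * (X * L (m+1)) -
          Polynomial.C (((m:ℝ)+1)/((m:ℝ)+2)) * L m := rfl
      have hdeg1 : (Polynomial.C ((2*(m:ℝ)+3)/((m:ℝ)+2)) * (X * L (m+1))).natDegree ≤ m+2 := by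
        refine le_trans natDegree_mul_le ?_
        rw [natDegree_C, zero_add]
        refine le_trans natDegree_mul_le ?_
        rw [natDegree_X, hd1]; omega
      have hdeg0 : (Polynomial.C (((m:ℝ)+1)/((m:ℝ)+2)) * L m).natDegree ≤ m := by
        refine le_trans natDegree_mul_le ?_; simp [natDegree_C, hd0]
      have hx : (X * L (m+1)).coeff (m+2) = (L (m+1)).coeff (m+1) := coeff_X_mul (L (m+1)) (m+1)
      have hz : (L m).coeff (m+2) = 0 := coeff_eq_zero_of_natDegree_lt (by omega)
      have hclead : (L (m+2)).coeff (m+2) =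
          ((2*(m:ℝ)+3)/((m:ℝ)+2)) * (L (m+1)).coeff (m+1) := by
        rw [hL, coeff_sub, coeff_C_mul, coeff_C_mul, hx, hz]
        ring
      have hcne : (L (m+2)).coeff (m+2) ≠ 0 := by
        rw [hclead]; exact mul_ne_zero ha hc1
      have hdeg : (L (m+2)).natDegree ≤ m+2 := by
        rw [hL]
        refine le_trans (natDegree_sub_le _ _) ?_
        exact max_le hdeg1 (le_trans hdeg0 (by omega))
      exact ⟨le_antisymm hdeg (le_natDegree_of_ne_zero hcne), hcne⟩

lemma Pint_boundary_E1 (n j : ℕ) :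
    Pint (derivative (((1 - X^2) * derivative (L (n+1))) * X^j)) = 0 := by
  rw [Pint_deriv]
  simp only [eval_mul, eval_sub, eval_pow, eval_one, eval_X]
  norm_num

lemma Pint_boundary_E2 (n j : ℕ) :
    Pint (derivative (L (n+1) * ((1 - X^2) * X^j))) = 0 := by
  rw [Pint_deriv]
  simp only [eval_mul, eval_sub, eval_pow, eval_one, eval_X]
  norm_num

lemma moment (n k : ℕ) (hk : k < n + 1) : Pint (L (n+1) * X^k) = 0 := by
  induction k using Nat.strong_induction_on with
  | _ k ih =>
    have hcoef : ((n:ℝ)+1) * ((n:ℝ)+2) ≠ 0 := by positivity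
    match k, hk with
    | 0, hk =>
      have e := Pint_boundary_E1 n 0
      rw [pow_zero, mul_one, L_ode n, Pint_Cmul] at e
      rw [pow_zero, mul_one]
      rcases mul_eq_zero.mp e with h | h
      · exact absurd h (by simpa using hcoef)
      · exact h
    | 1, hk =>
      have hn : 1 ≤ n := by omega
      have i1 : derivative (L (n+1) * ((1 - X^2) * X^0)) =
          ((1 - X^2) * derivative (L (n+1))) + C (-2 : ℝ) * (L (n+1) * X^1) := by
        simp only [pow_zero, mul_one, derivative_mul, derivative_sub, derivative_one,
          derivative_X_pow, derivative_X]
        push_cast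
        ring_nf
        simp only [map_neg, map_ofNat]
        ring
      have e2 := Pint_boundary_E2 n 0
      rw [i1, Pint_add, Pint_Cmul] at e2
      have i2 : derivative (((1 - X^2) * derivative (L (n+1))) * X^1) =
          C (-(((n:ℝ)+1) * ((n:ℝ)+2))) * (L (n+1) * X^1) +
            ((1 - X^2) * derivative (L (n+1))) := by
        rw [derivative_mul, L_ode n]
        simp only [pow_one, derivative_X]
        ring
      have e1 := Pint_boundary_E1 n 1
      rw [i2, Pint_add, Pint_Cmul] at e1
      have hnn : (1:ℝ) ≤ (n:ℝ) := by exact_mod_cast hn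
      have hkey : (2 - ((n:ℝ)+1) * ((n:ℝ)+2)) * Pint (L (n+1) * X^1) = 0 := by linarith
      have h2 : (2 - ((n:ℝ)+1) * ((n:ℝ)+2)) ≠ 0 := by nlinarith
      exact (mul_eq_zero.mp hkey).resolve_left h2
    | (k+2), hk =>
      have hJk : Pint (L (n+1) * X^k) = 0 := ih k (by omega) (by omega)
      have i3 : derivative (L (n+1) * ((1 - X^2) * X^(k+1))) =
          ((1 - X^2) * derivative (L (n+1))) * X^(k+1) +
            (C ((k:ℝ)+1) * (L (n+1) * X^k) - C ((k:ℝ)+3) * (L (n+1) * X^(k+2))) := by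
        rw [derivative_mul, derivative_mul, derivative_X_pow, derivative_sub, derivative_one,
          derivative_X_pow]
        rw [show k+1-1 = k from rfl, show 2-1 = 1 from rfl]
        push_cast
        simp only [map_add, map_mul, map_ofNat, map_one, pow_one]
        ring
      have e2 := Pint_boundary_E2 n (k+1)
      rw [i3, Pint_add, Pint_sub, Pint_Cmul, Pint_Cmul, hJk] at e2
      have i4 : derivative (((1 - X^2) * derivative (L (n+1))) * X^(k+2)) =
          C (-(((n:ℝ)+1) * ((n:ℝ)+2))) * (L (n+1) * X^(k+2)) +
            C ((k:ℝ)+2) * (((1 - X^2) * derivative (L (n+1))) * X^(k+1)) := by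
        rw [derivative_mul, L_ode n, derivative_X_pow]
        rw [show k+2-1 = k+1 from rfl]
        push_cast
        simp only [map_add, map_mul, map_ofNat, map_one]
        ring
      have e1 := Pint_boundary_E1 n (k+2)
      rw [i4, Pint_add, Pint_Cmul, Pint_Cmul] at e1
      have hkn : (k:ℝ) + 2 ≤ (n:ℝ) := by exact_mod_cast (by omega : k + 2 ≤ n)
      have hkey : (((k:ℝ)+2) * ((k:ℝ)+3) - ((n:ℝ)+1) * ((n:ℝ)+2)) *
          Pint (L (n+1) * X^(k+2)) = 0 := by
        nlinarith [e1, e2]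
      have hne : (((k:ℝ)+2) * ((k:ℝ)+3) - ((n:ℝ)+1) * ((n:ℝ)+2)) ≠ 0 := by nlinarith
      exact (mul_eq_zero.mp hkey).resolve_left hne

lemma Pint_sum {ι : Type*} (s : Finset ι) (P : ι → Polynomial ℝ) :
    Pint (∑ i ∈ s, P i) = ∑ i ∈ s, Pint (P i) := by
  unfold Pint
  simp only [eval_finset_sum]
  exact intervalIntegral.integral_finset_sum (fun i _ => pii (P i) _ _)

lemma Pint_L_mul (n : ℕ) (h : Polynomial ℝ) (hd : h.natDegree < n) : Pint (L n * h) = 0 := by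
  match n, hd with
  | (n+1), hd =>
    conv_lhs => rw [as_sum_range' h (h.natDegree + 1) (by omega)]
    rw [Finset.mul_sum, Pint_sum]
    apply Finset.sum_eq_zero
    intro i hi
    simp only [Finset.mem_range] at hi
    rw [← C_mul_X_pow_eq_monomial, mul_left_comm, Pint_Cmul,
      moment n i (by omega), mul_zero]

lemma deg_sq_mul (q : Polynomial ℝ) : ((1 - X^2) * q).natDegree ≤ q.natDegree + 2 := by
  refine le_trans natDegree_mul_le ?_
  have h1 : (1 - X^2 : Polynomial ℝ).natDegree ≤ 2 := by
    refine le_trans (natDegree_sub_le _ _) ?_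
    simp [natDegree_X_pow]
  omega

lemma Pint_dL_mul (n : ℕ) (q : Polynomial ℝ) (hq : q.natDegree + 2 ≤ n) :
    Pint (derivative (L n) * ((1 - X^2) * q)) = 0 := by
  have h1 : Pint (derivative (L n * ((1 - X^2) * q))) = 0 := by
    rw [Pint_deriv]
    simp only [eval_mul, eval_sub, eval_pow, eval_one, eval_X]
    norm_num
  rw [derivative_mul, Pint_add] at h1
  have h2 : Pint (L n * derivative ((1 - X^2) * q)) = 0 := by
    apply Pint_L_mul
    have := natDegree_derivative_le ((1 - X^2) * q)
    have := deg_sq_mul q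
    omega
  linarith

lemma Pint_sq_eq_zero {P : Polynomial ℝ} (h : Pint (P^2) = 0) : P = 0 := by
  by_contra hP
  have hfin : {x : ℝ | P.IsRoot x}.Finite := Polynomial.finite_setOf_isRoot hP
  have hInt : ∫ x in Set.Ioc (-1:ℝ) 1, (P^2).eval x = 0 := by
    rw [← intervalIntegral.integral_of_le (by norm_num : (-1:ℝ) ≤ 1)]
    exact h
  have hnn : 0 ≤ fun x : ℝ => (P^2).eval x := by
    intro x; simp only [eval_pow, Pi.zero_apply]; positivity
  have hcont : Continuous fun x : ℝ => (P^2).eval x := (P^2).continuous_aeval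
  have hint : IntegrableOn (fun x : ℝ => (P^2).eval x) (Set.Ioc (-1:ℝ) 1) volume :=
    hcont.integrableOn_Ioc
  have hae := (MeasureTheory.integral_eq_zero_iff_of_nonneg hnn hint).mp hInt
  rw [Filter.EventuallyEq, ae_iff] at hae
  simp only [Pi.zero_apply] at hae
  have hopen : IsOpen {x : ℝ | (P^2).eval x ≠ 0} := by
    have : {x : ℝ | (P^2).eval x ≠ 0} = (fun x : ℝ => (P^2).eval x) ⁻¹' {y | y ≠ 0} := rfl
    rw [this]
    exact isOpen_ne.preimage hcont
  rw [Measure.restrict_apply hopen.measurableSet] at hae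
  have hsub : Set.Ioc (-1:ℝ) 1 ⊆
      ({x : ℝ | (P^2).eval x ≠ 0} ∩ Set.Ioc (-1:ℝ) 1) ∪ {x : ℝ | P.IsRoot x} := by
    intro x hx
    by_cases hz : (P^2).eval x = 0
    · right
      have : P.eval x = 0 := by
        have h2 := hz; rw [eval_pow] at h2
        exact pow_eq_zero_iff (n := 2) (by norm_num) |>.mp h2
      exact this
    · left; exact ⟨hz, hx⟩
  have hle := measure_mono (μ := volume) hsub
  have hle2 := le_trans hle (measure_union_le _ _)
  rw [hae, hfin.measure_zero, add_zero, Real.volume_Ioc] at hle2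
  norm_num at hle2

lemma Pint_form (P q : Polynomial ℝ) :
    Pint (P * ((1 - X^2) * q)) = ∫ x in (-1:ℝ)..1, P.eval x * ((1 - x^2) * q.eval x) := by
  unfold Pint
  simp only [eval_mul, eval_sub, eval_pow, eval_one, eval_X]

end LegendreAux

open LegendreAux

theorem orth_complement_eq_span (p : ℕ) (hp : 3 ≤ p) (f : Polynomial ℝ)
    (hf : f.natDegree ≤ p) :
    (∀ q : Polynomial ℝ, q.natDegree ≤ p - 3 →
        ∫ x in (-1:ℝ)..1, f.eval x * ((1 - x^2) * q.eval x) = 0) ↔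
      f ∈ Submodule.span ℝ
        ({L p, Polynomial.derivative (L p), Polynomial.derivative (L (p-1))} :
          Set (Polynomial ℝ)) := by
  obtain ⟨m, rfl⟩ : ∃ m, p = m + 3 := ⟨p - 3, by omega⟩
  simp only [show m+3-3 = m from rfl, show m+3-1 = m+2 from rfl]
  obtain ⟨hdeg3, hc3⟩ := L_deg (m+3)
  obtain ⟨hdeg2, hc2⟩ := L_deg (m+2)
  have hD3deg : (derivative (L (m+3))).natDegree ≤ m+2 := by
    have h := natDegree_derivative_le (L (m+3)); rw [hdeg3] at h; omega
  have hD2deg : (derivative (L (m+2))).natDegree ≤ m+1 := by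
    have h := natDegree_derivative_le (L (m+2)); rw [hdeg2] at h; omega
  constructor
  · intro horth
    have horth' : ∀ q : Polynomial ℝ, q.natDegree ≤ m → Pint (f * ((1 - X^2) * q)) = 0 := by
      intro q hq
      rw [Pint_form]; exact horth q hq
    set a : ℝ := f.coeff (m+3) / (L (m+3)).coeff (m+3) with ha
    set A : ℝ := ((m:ℝ)+3) * ((m:ℝ)+4) / 2 with hA
    set B : ℝ := ((m:ℝ)+2) * ((m:ℝ)+3) / 2 with hB
    set s : ℝ := (-1:ℝ)^m with hs
    set u : ℝ := f.eval 1 - a with hu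
    set v : ℝ := f.eval (-1) - a * (-1)^(m+3) with hv
    set b : ℝ := (u + s*v)/(2*A) with hb
    set c : ℝ := (u - s*v)/(2*B) with hc
    set g : Polynomial ℝ := f - C a * L (m+3) - C b * derivative (L (m+3)) -
      C c * derivative (L (m+2)) with hgdef
    have hApos : (0:ℝ) < A := by rw [hA]; positivity
    have hBpos : (0:ℝ) < B := by rw [hB]; positivity
    have hAne : A ≠ 0 := ne_of_gt hApos
    have hBne : B ≠ 0 := ne_of_gt hBpos
    have hs2 : s * s = 1 := by
      rw [hs, ← pow_add]
      exact Even.neg_one_pow ⟨m, rfl⟩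
    have e3_1 : (derivative (L (m+3))).eval 1 = A := by
      rw [dL_eval_one, hA]; push_cast; ring
    have e3_n : (derivative (L (m+3))).eval (-1) = s * A := by
      rw [dL_eval_negone, show m+3+1 = m+4 from rfl, pow_add, hs, hA]; push_cast; ring
    have e2_1 : (derivative (L (m+2))).eval 1 = B := by
      rw [dL_eval_one, hB]; push_cast; ring
    have e2_n : (derivative (L (m+2))).eval (-1) = -(s * B) := by
      rw [dL_eval_negone, show m+2+1 = m+3 from rfl, pow_add, hs, hB]; push_cast; ring
    have haux1 : b * A = (u + s*v)/2 := by rw [hb]; field_simp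
    have haux2 : c * B = (u - s*v)/2 := by rw [hc]; field_simp
    have hg1 : g.eval 1 = 0 := by
      rw [hgdef]
      simp only [eval_sub, eval_mul, eval_C, L_eval_one, e3_1, e2_1, mul_one]
      linear_combination -haux1 - haux2 - hu
    have hgn : g.eval (-1) = 0 := by
      rw [hgdef]
      simp only [eval_sub, eval_mul, eval_C, L_eval_negone, e3_n, e2_n]
      linear_combination (-s) * haux1 + s * haux2 - hv - v * hs2
    have hcoeff0 : (f - C a * L (m+3)).coeff (m+3) = 0 := by
      rw [coeff_sub, coeff_C_mul, ha, div_mul_cancel₀ _ hc3, sub_self]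
    have hfa_deg : (f - C a * L (m+3)).natDegree ≤ m+2 := by
      have hle : (f - C a * L (m+3)).natDegree ≤ m+3 :=
        le_trans (natDegree_sub_le _ _)
          (max_le hf (le_trans natDegree_mul_le (by simp [hdeg3])))
      rw [natDegree_le_iff_coeff_eq_zero]
      intro N hN
      rcases eq_or_lt_of_le (show m+3 ≤ N by omega) with hEq | hLt
      · rw [← hEq]; exact hcoeff0
      · exact coeff_eq_zero_of_natDegree_lt (by omega)
    have hgdeg : g.natDegree ≤ m+2 := by
      rw [hgdef]
      refine le_trans (natDegree_sub_le _ _) (max_le (le_trans (natDegree_sub_le _ _)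
        (max_le hfa_deg ?_)) ?_)
      · exact le_trans natDegree_mul_le (by simp only [natDegree_C, zero_add]; exact hD3deg)
      · refine le_trans natDegree_mul_le ?_
        simp only [natDegree_C, zero_add]
        omega
    have hgorth : ∀ q : Polynomial ℝ, q.natDegree ≤ m → Pint (g * ((1 - X^2) * q)) = 0 := by
      intro q hq
      have hexp : g * ((1 - X^2) * q) = f * ((1 - X^2) * q)
          - C a * (L (m+3) * ((1 - X^2) * q))
          - C b * (derivative (L (m+3)) * ((1 - X^2) * q))
          - C c * (derivative (L (m+2)) * ((1 - X^2) * q)) := by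
        rw [hgdef]; ring
      rw [hexp, Pint_sub, Pint_sub, Pint_sub, Pint_Cmul, Pint_Cmul, Pint_Cmul,
        horth' q hq, Pint_L_mul _ _ (by have := deg_sq_mul q; omega),
        Pint_dL_mul _ _ (by omega), Pint_dL_mul _ _ (by omega)]
      ring
    obtain ⟨g2, hg2⟩ := (dvd_iff_isRoot.mpr hg1 : (X - C (1:ℝ)) ∣ g)
    have hg2n : g2.eval (-1) = 0 := by
      have h := hgn
      rw [hg2] at h
      simp only [eval_mul, eval_sub, eval_X, eval_C] at h
      rcases mul_eq_zero.mp h with h' | h'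
      · norm_num at h'
      · exact h'
    obtain ⟨q0, hq0⟩ := (dvd_iff_isRoot.mpr hg2n : (X - C (-1:ℝ)) ∣ g2)
    have hgfact : g = (X - C (1:ℝ)) * ((X - C (-1:ℝ)) * q0) := by rw [hg2, hq0]
    have hgfact' := hgfact
    simp only [map_one, map_neg, sub_neg_eq_add] at hgfact'
    have hgz : g = 0 := by
      by_cases hq0z : q0 = 0
      · rw [hgfact, hq0z]; ring
      · have hXm1 : (X - C (1:ℝ)) ≠ 0 := X_sub_C_ne_zero 1
        have hXp1 : (X - C (-1:ℝ)) ≠ 0 := X_sub_C_ne_zero (-1)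
        have hdg : g.natDegree ≤ m+2 := hgdeg
        rw [hgfact, natDegree_mul hXm1 (mul_ne_zero hXp1 hq0z),
          natDegree_mul hXp1 hq0z, natDegree_X_sub_C, natDegree_X_sub_C] at hdg
        have hq0deg : q0.natDegree ≤ m := by omega
        have hiden : (1 - X^2) * (-q0) = g := by rw [hgfact']; ring
        have horthq0 : Pint (g * ((1 - X^2) * (-q0))) = 0 := by
          apply hgorth
          simpa [natDegree_neg] using hq0deg
        rw [hiden, ← sq] at horthq0
        exact Pint_sq_eq_zero horthq0
    have hgz' : f - C a * L (m+3) - C b * derivative (L (m+3)) -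
        C c * derivative (L (m+2)) = 0 := by rw [← hgdef]; exact hgz
    have hfrep : f = a • L (m+3) + (b • derivative (L (m+3)) + c • derivative (L (m+2))) := by
      simp only [smul_eq_C_mul]
      linear_combination hgz'
    rw [hfrep]
    refine Submodule.add_mem _ ?_ (Submodule.add_mem _ ?_ ?_)
    · exact Submodule.smul_mem _ _ (Submodule.subset_span (by simp))
    · exact Submodule.smul_mem _ _ (Submodule.subset_span (by simp))
    · exact Submodule.smul_mem _ _ (Submodule.subset_span (by simp))
  · intro hmem q hq
    rw [← Pint_form]
    rw [Submodule.mem_span_insert] at hmem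
    obtain ⟨r1, z, hz, rfl⟩ := hmem
    rw [Submodule.mem_span_insert] at hz
    obtain ⟨r2, z2, hz2, rfl⟩ := hz
    rw [Submodule.mem_span_singleton] at hz2
    obtain ⟨r3, rfl⟩ := hz2
    have hq' : q.natDegree ≤ m := hq
    have hexp : (r1 • L (m+3) + (r2 • derivative (L (m+3)) + r3 • derivative (L (m+2)))) *
        ((1 - X^2) * q)
        = C r1 * (L (m+3) * ((1 - X^2) * q))
          + C r2 * (derivative (L (m+3)) * ((1 - X^2) * q))
          + C r3 * (derivative (L (m+2)) * ((1 - X^2) * q)) := by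
      simp only [smul_eq_C_mul]; ring
    rw [hexp, Pint_add, Pint_add, Pint_Cmul, Pint_Cmul, Pint_Cmul,
      Pint_L_mul _ _ (by have := deg_sq_mul q; omega),
      Pint_dL_mul _ _ (by omega), Pint_dL_mul _ _ (by omega)]
    ring
end

section
/- Let p ≥ 3 and suppose η = λ₂ L_p' + λ₃ L_{p-1}' (with λ₁ = 0, i.e., no L_p component) satisfies η(-1) = 0 and η ≠ 0. Then λ₂ = λ₃ (p-1)/(p+1), and with λ₃ = 1 the quantity Δ(η) = (2η(1) - 3η_p)² + p²(-4‖η‖²_{L²(-1,1)} + 9η_p²/(2p+1)) equals -4(p-1)p²(p²+1)/(p+1), which is strictly negative. -/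
open Polynomial intervalIntegral

set_option linter.unusedVariables false
set_option linter.unnecessarySeqFocus false
set_option maxHeartbeats 1000000

lemma L_rec (k : ℕ) : L (k+2) = Polynomial.C ((2*(k:ℝ)+3)/((k:ℝ)+2)) * (X * L (k+1)) -
      Polynomial.C (((k:ℝ)+1)/((k:ℝ)+2)) * L k := rfl

lemma L_rec' (k : ℕ) : C ((k:ℝ)+2) * L (k+2) =
    C (2*(k:ℝ)+3) * (X * L (k+1)) - C ((k:ℝ)+1) * L k := by
  have h : ((k:ℝ)+2) ≠ 0 := by positivity
  have e1 : C ((k:ℝ)+2) * C ((2*(k:ℝ)+3)/((k:ℝ)+2)) = (C (2*(k:ℝ)+3) : Polynomial ℝ) := by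
    rw [← C_mul]; congr 1; field_simp
  have e2 : C ((k:ℝ)+2) * C (((k:ℝ)+1)/((k:ℝ)+2)) = (C ((k:ℝ)+1) : Polynomial ℝ) := by
    rw [← C_mul]; congr 1; field_simp
  rw [L_rec, mul_sub]
  simp only [← mul_assoc]
  rw [e1, e2]

lemma L_rec1 (n : ℕ) : C ((n:ℝ)+1) * L (n+1) =
    C (2*(n:ℝ)+1) * (X * L n) - C ((n:ℝ)) * L (n-1) := by
  cases n with
  | zero => simp [L]
  | succ k =>
    have := L_rec' k
    push_cast
    push_cast at this
    convert this using 2 <;> ring_nf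

lemma L_AC (n : ℕ) :
    derivative (L (n+1)) = X * derivative (L n) + C ((n:ℝ)+1) * L n ∧
    (1 - X^2) * derivative (L n) = C (n:ℝ) * (L (n-1) - X * L n) := by
  induction n with
  | zero => constructor <;> simp [L]
  | succ n ih =>
    obtain ⟨ha, hc⟩ := ih
    have key := L_rec1 n
    simp only [C_add, C_mul, C_1, map_ofNat] at ha hc key
    have hc' : (1 - X^2) * derivative (L (n+1))
        = (C (n:ℝ) + 1) * (L n - X * L (n+1)) := by
      linear_combination (1 - X^2) * ha + X * hc + X * key
    have hb : X * derivative (L (n+1)) - derivative (L n) = (C (n:ℝ) + 1) * L (n+1) := by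
      linear_combination X * ha - hc - key
    constructor
    · -- A (n+1)
      have hdk : C ((n:ℝ)+2) * derivative (L (n+2))
          = C (2*(n:ℝ)+3) * (L (n+1) + X * derivative (L (n+1))) - C ((n:ℝ)+1) * derivative (L n) := by
        have := congrArg derivative (L_rec' n)
        simpa [derivative_mul] using this
      have h2 : ((n:ℝ)+2) ≠ 0 := by positivity
      apply mul_left_cancel₀ (a := (C ((n:ℝ)+2) : Polynomial ℝ)) (C_ne_zero.mpr h2)
      push_cast
      simp only [C_add, C_mul, C_1, map_ofNat] at hdk ⊢
      linear_combination hdk + ((C (n:ℝ) : Polynomial ℝ) + 1) * hb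
    · push_cast
      simp only [C_add, C_mul, C_1, map_ofNat, Nat.add_sub_cancel]
      exact hc'

lemma L_A (n : ℕ) : derivative (L (n+1)) = X * derivative (L n) + C ((n:ℝ)+1) * L n :=
  (L_AC n).1

lemma L_C (n : ℕ) : (1 - X^2) * derivative (L n) = C (n:ℝ) * (L (n-1) - X * L n) :=
  (L_AC n).2

lemma L_B (n : ℕ) : X * derivative (L n) - derivative (L (n-1)) = C (n:ℝ) * L n := by
  cases n with
  | zero => simp [L]
  | succ n =>
    have ha := L_A n
    have hc := L_C n
    have key := L_rec1 n
    simp only [C_add, C_mul, C_1, map_ofNat] at ha hc key ⊢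
    push_cast
    simp only [C_add, C_mul, C_1, map_ofNat, Nat.add_sub_cancel]
    linear_combination X * ha - hc - key

lemma L_ODE (n : ℕ) : derivative ((1 - X^2) * derivative (L n))
    = C (-((n:ℝ) * ((n:ℝ)+1))) * L n := by
  have hdc := congrArg derivative (L_C n)
  have hb := L_B n
  simp only [derivative_mul, derivative_sub, derivative_one, derivative_X, derivative_pow,
    derivative_C, Nat.cast_ofNat, pow_one, mul_one, one_mul, zero_mul, zero_sub, zero_add] at hdc
  simp only [derivative_mul, derivative_sub, derivative_one, derivative_X, derivative_pow,
    derivative_C, Nat.cast_ofNat, pow_one, mul_one, one_mul, zero_mul, zero_sub, zero_add]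
  simp only [C_add, C_mul, C_1, map_ofNat, map_neg] at hdc hb ⊢
  linear_combination hdc - (C (n:ℝ) : Polynomial ℝ) * hb

lemma L_eval_one (m : ℕ) : (L m).eval 1 = 1 := by
  induction m using Nat.strong_induction_on with
  | _ m ih =>
    match m with
    | 0 => simp [L]
    | 1 => simp [L]
    | (k+2) =>
      have h1 := ih (k+1) (by omega)
      have h0 := ih k (by omega)
      have hk : ((k:ℝ)+2) ≠ 0 := by positivity
      simp [L, h1, h0]
      field_simp
      ring

lemma L_eval_neg_one (m : ℕ) : (L m).eval (-1) = (-1)^m := by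
  induction m using Nat.strong_induction_on with
  | _ m ih =>
    match m with
    | 0 => simp [L]
    | 1 => simp [L]
    | (k+2) =>
      have h1 := ih (k+1) (by omega)
      have h0 := ih k (by omega)
      have hk : ((k:ℝ)+2) ≠ 0 := by positivity
      simp [L, h1, h0, pow_succ]
      field_simp
      ring

lemma dL_eval_one (n : ℕ) : (derivative (L n)).eval 1 = (n:ℝ)*((n:ℝ)+1)/2 := by
  induction n with
  | zero => simp [L]
  | succ n ih =>
    have := congrArg (Polynomial.eval (1:ℝ)) (L_A n)
    simp [ih, L_eval_one] at this
    rw [this]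
    push_cast
    ring

lemma dL_eval_neg_one (n : ℕ) :
    (derivative (L n)).eval (-1) = (-1)^(n+1) * ((n:ℝ)*((n:ℝ)+1)/2) := by
  induction n with
  | zero => simp [L]
  | succ n ih =>
    have := congrArg (Polynomial.eval (-1:ℝ)) (L_A n)
    simp [ih, L_eval_neg_one] at this
    rw [this]
    push_cast
    ring

lemma natDegree_L_le (m : ℕ) : (L m).natDegree ≤ m := by
  induction m using Nat.strong_induction_on with
  | _ m ih =>
    match m with
    | 0 => simp [L]
    | 1 => simp [L]
    | (k+2) =>
      have h1 := ih (k+1) (by omega)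
      have h0 := ih k (by omega)
      rw [show L (k+2) = Polynomial.C ((2*(k:ℝ)+3)/((k:ℝ)+2)) * (X * L (k+1)) -
        Polynomial.C (((k:ℝ)+1)/((k:ℝ)+2)) * L k from rfl]
      apply le_trans (natDegree_sub_le _ _)
      simp only [max_le_iff]
      constructor
      · refine le_trans natDegree_mul_le ?_
        have h2 := natDegree_mul_le (p := (X : Polynomial ℝ)) (q := L (k+1))
        rw [natDegree_X] at h2
        have hC : (C ((2*(k:ℝ)+3)/((k:ℝ)+2))).natDegree = 0 := natDegree_C _
        omega
      · apply le_trans (natDegree_mul_le)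
        simpa using le_trans h0 (by omega)

lemma coeff_L_pos (m : ℕ) : 0 < (L m).coeff m := by
  induction m using Nat.strong_induction_on with
  | _ m ih =>
    match m with
    | 0 => simp [L]
    | 1 => simp [L]
    | (k+2) =>
      have h1 := ih (k+1) (by omega)
      have hk : (0:ℝ) < ((k:ℝ)+2) := by positivity
      have hz : (L k).coeff (k+2) = 0 :=
        coeff_eq_zero_of_natDegree_lt (lt_of_le_of_lt (natDegree_L_le k) (by omega))
      rw [show L (k+2) = Polynomial.C ((2*(k:ℝ)+3)/((k:ℝ)+2)) * (X * L (k+1)) -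
        Polynomial.C (((k:ℝ)+1)/((k:ℝ)+2)) * L k from rfl]
      rw [coeff_sub, coeff_C_mul, coeff_C_mul, hz, mul_zero, sub_zero,
        show k+2 = (k+1)+1 from rfl, coeff_X_mul]
      have : (0:ℝ) < (2*(k:ℝ)+3)/((k:ℝ)+2) := by positivity
      exact mul_pos this h1

noncomputable def intP (P : Polynomial ℝ) : ℝ := ∫ x in (-1:ℝ)..1, P.eval x

lemma intP_derivative (P : Polynomial ℝ) : intP (derivative P) = P.eval 1 - P.eval (-1) :=
  intervalIntegral.integral_eq_sub_of_hasDerivAt (fun x _ => P.hasDerivAt x)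
    ((P.derivative.continuous_aeval).intervalIntegrable _ _)

lemma intP_add (P Q : Polynomial ℝ) : intP (P + Q) = intP P + intP Q := by
  unfold intP
  simp only [eval_add]
  exact intervalIntegral.integral_add ((P.continuous_aeval).intervalIntegrable _ _)
    ((Q.continuous_aeval).intervalIntegrable _ _)

lemma intP_sub (P Q : Polynomial ℝ) : intP (P - Q) = intP P - intP Q := by
  unfold intP
  simp only [eval_sub]
  exact intervalIntegral.integral_sub ((P.continuous_aeval).intervalIntegrable _ _)
    ((Q.continuous_aeval).intervalIntegrable _ _)

lemma intP_Cmul (a : ℝ) (P : Polynomial ℝ) : intP (C a * P) = a * intP P := by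
  unfold intP
  simp only [eval_mul, eval_C]
  exact intervalIntegral.integral_const_mul a _

lemma intP_sum {ι : Type*} (s : Finset ι) (f : ι → Polynomial ℝ) :
    intP (∑ i ∈ s, f i) = ∑ i ∈ s, intP (f i) := by
  classical
  induction s using Finset.induction_on with
  | empty => simp [intP]
  | insert x s h ih => rw [Finset.sum_insert h, intP_add, ih, Finset.sum_insert h]

lemma parts (P Q : Polynomial ℝ) :
    intP (derivative P * Q) + intP (P * derivative Q)
      = P.eval 1 * Q.eval 1 - P.eval (-1) * Q.eval (-1) := by
  rw [← intP_add, ← derivative_mul, intP_derivative, eval_mul, eval_mul]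

lemma green (P Q : Polynomial ℝ) :
    intP (derivative ((1 - X^2) * derivative P) * Q)
      = intP (derivative ((1 - X^2) * derivative Q) * P) := by
  have key : derivative ((1 - X^2) * derivative P) * Q
      - derivative ((1 - X^2) * derivative Q) * P
      = derivative ((1 - X^2) * derivative P * Q - (1 - X^2) * derivative Q * P) := by
    simp only [derivative_mul, derivative_sub]
    ring
  have h2 := intP_derivative ((1 - X^2) * derivative P * Q - (1 - X^2) * derivative Q * P)
  rw [← key, intP_sub] at h2
  simp only [eval_sub, eval_mul, eval_one, eval_pow, eval_X, one_pow] at h2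
  norm_num at h2 ⊢ <;> linarith

lemma ortho_pow : ∀ k, ∀ n : ℕ, k < n → intP (X^k * L n) = 0 := by
  intro k
  induction k using Nat.strong_induction_on with
  | _ k ih =>
    intro n hkn
    have hg := green (L n) (X^k : Polynomial ℝ)
    rw [L_ODE n, mul_assoc, intP_Cmul] at hg
    have hcomm : (L n * X^k : Polynomial ℝ) = X^k * L n := mul_comm _ _
    rw [hcomm] at hg
    match k, hkn with
    | 0, hkn =>
      have hd : derivative ((1 - X^2) * derivative ((X:Polynomial ℝ)^0)) = 0 := by
        simp
      have hz : intP (0 : Polynomial ℝ) = 0 := by simp [intP]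
      rw [hd, zero_mul, hz] at hg
      have h1 : (1:ℝ) ≤ (n:ℝ) := by exact_mod_cast hkn
      have hne : -((n:ℝ) * ((n:ℝ)+1)) ≠ 0 := by nlinarith
      exact (mul_eq_zero.mp hg).resolve_left hne
    | 1, hkn =>
      have hd : derivative ((1 - X^2) * derivative ((X:Polynomial ℝ)^1)) = C (-2) * (X^1) := by
        simp only [pow_one, derivative_X, mul_one]
        simp [derivative_sub, derivative_pow]
      rw [hd, mul_assoc, intP_Cmul] at hg
      have h2 : (2:ℝ) ≤ (n:ℝ) := by exact_mod_cast hkn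
      have key2 : (-((n:ℝ) * ((n:ℝ)+1)) + 2) * intP (X^1 * L n) = 0 := by
        linear_combination hg
      have hne : (-((n:ℝ) * ((n:ℝ)+1)) + 2) ≠ 0 := by nlinarith
      exact (mul_eq_zero.mp key2).resolve_left hne
    | (j+2), hkn =>
      have hd : derivative ((1 - X^2) * derivative ((X:Polynomial ℝ)^(j+2)))
          = C (((j:ℝ)+2)*((j:ℝ)+1)) * X^j - C (((j:ℝ)+2)*((j:ℝ)+3)) * X^(j+2) := by
        have h1 : derivative ((X:Polynomial ℝ)^(j+2)) = C ((j:ℝ)+2) * X^(j+1) := by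
          rw [derivative_X_pow]
          norm_num
        rw [h1]
        simp only [derivative_mul, derivative_sub, derivative_one, derivative_C,
          derivative_X_pow, derivative_X]
        norm_num
        simp only [map_ofNat]
        ring
      rw [hd, sub_mul, intP_sub, mul_assoc, mul_assoc, intP_Cmul, intP_Cmul] at hg
      have hIj : intP (X^j * L n) = 0 := ih j (by omega) n (by omega)
      rw [hIj, mul_zero] at hg
      have key2 : (-((n:ℝ) * ((n:ℝ)+1)) + ((j:ℝ)+2)*((j:ℝ)+3)) * intP (X^(j+2) * L n) = 0 := by
        linear_combination hg
      have h3 : (j:ℝ) + 3 ≤ (n:ℝ) := by exact_mod_cast (by omega : j+3 ≤ n)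
      have h4 := mul_le_mul h3 (by linarith : (j:ℝ)+4 ≤ (n:ℝ)+1)
        (by positivity) (by linarith [Nat.cast_nonneg (α := ℝ) n])
      have hne : (-((n:ℝ) * ((n:ℝ)+1)) + ((j:ℝ)+2)*((j:ℝ)+3)) ≠ 0 := by nlinarith [h4]
      exact (mul_eq_zero.mp key2).resolve_left hne
lemma ortho_poly (n : ℕ) (q : Polynomial ℝ) (h : q.natDegree < n) : intP (q * L n) = 0 := by
  conv_lhs => rw [q.as_sum_range' (q.natDegree + 1) (Nat.lt_succ_self _)]
  rw [Finset.sum_mul, intP_sum]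
  apply Finset.sum_eq_zero
  intro i hi
  rw [← C_mul_X_pow_eq_monomial, mul_assoc, intP_Cmul,
    ortho_pow i n (by simp at hi; omega), mul_zero]

lemma natDegree_ddL_lt (n : ℕ) (hn : 1 ≤ n) :
    (derivative (derivative (L n))).natDegree < n := by
  have h1 := natDegree_derivative_le (derivative (L n))
  have h2 := natDegree_derivative_le (L n)
  have h3 := natDegree_L_le n
  omega

lemma intP_dL_sq (n : ℕ) (hn : 1 ≤ n) :
    intP (derivative (L n) * derivative (L n)) = (n:ℝ)*((n:ℝ)+1) := by
  have hp := parts (L n) (derivative (L n))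
  have ho : intP (L n * derivative (derivative (L n))) = 0 := by
    rw [mul_comm]
    exact ortho_poly n _ (natDegree_ddL_lt n hn)
  rw [ho, L_eval_one, L_eval_neg_one, dL_eval_one, dL_eval_neg_one] at hp
  have hs : ((-1:ℝ))^n * ((-1)^(n+1) * ((n:ℝ)*((n:ℝ)+1)/2))
      = -((n:ℝ)*((n:ℝ)+1)/2) := by
    rw [pow_succ]
    rcases Nat.even_or_odd n with he | ho2
    · rw [he.neg_one_pow]; ring
    · rw [ho2.neg_one_pow]; ring
  rw [hs] at hp
  linarith

lemma intP_dL_cross (m : ℕ) (hm : 1 ≤ m) :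
    intP (derivative (L (m+1)) * derivative (L m)) = 0 := by
  have hp := parts (L m) (derivative (L (m+1)))
  have ho : intP (L m * derivative (derivative (L (m+1)))) = 0 := by
    rw [mul_comm]
    apply ortho_poly m
    have h1 := natDegree_derivative_le (derivative (L (m+1)))
    have h2 := natDegree_derivative_le (L (m+1))
    have h3 := natDegree_L_le (m+1)
    omega
  rw [ho, L_eval_one, L_eval_neg_one, dL_eval_one, dL_eval_neg_one] at hp
  have hpow : ((-1:ℝ))^(m+1+1) = (-1)^m := by rw [pow_succ, pow_succ]; ring
  rw [hpow] at hp
  have hsq : ((-1:ℝ))^m * (-1)^m = 1 := by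
    rw [← pow_add]; exact Even.neg_one_pow ⟨m, rfl⟩
  push_cast at hp
  rw [mul_comm (derivative (L (m+1)))]
  linear_combination hp - (((m:ℝ)+1)*((m:ℝ)+2)/2) * hsq

lemma coeff_L_eq_zero {m k : ℕ} (h : m < k) : (L m).coeff k = 0 :=
  coeff_eq_zero_of_natDegree_lt (lt_of_le_of_lt (natDegree_L_le m) h)

lemma ap_zero (p : ℕ) (hp : 3 ≤ p) (l2 l3 : ℝ) (a : ℕ → ℝ) (η : Polynomial ℝ)
    (hη : η = Polynomial.C l2 * Polynomial.derivative (L p)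
        + Polynomial.C l3 * Polynomial.derivative (L (p-1)))
    (hdecomp : η = ∑ m ∈ Finset.Icc 1 p, Polynomial.C (a m) * (L m + L (m-1))) :
    a p = 0 := by
  have h1 : η.coeff p = 0 := by
    rw [hη]
    simp only [coeff_add, coeff_C_mul, coeff_derivative]
    rw [coeff_L_eq_zero (by omega : p < p+1), coeff_L_eq_zero (by omega : p-1 < p+1)]
    ring
  have h2 : η.coeff p = a p * (L p).coeff p := by
    rw [hdecomp, finset_sum_coeff]
    rw [Finset.sum_eq_single p]
    · simp only [coeff_C_mul, coeff_add]
      rw [coeff_L_eq_zero (by omega : p-1 < p)]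
      ring
    · intro m hm hne
      simp only [Finset.mem_Icc] at hm
      simp only [coeff_C_mul, coeff_add]
      rw [coeff_L_eq_zero (by omega : m < p), coeff_L_eq_zero (by omega : m-1 < p)]
      ring
    · intro h
      simp only [Finset.mem_Icc] at h
      omega
  have := coeff_L_pos p
  rw [h1] at h2
  rcases mul_eq_zero.mp h2.symm with h | h
  · exact h
  · linarith

theorem case2_Delta_value (p : ℕ) (hp : 3 ≤ p) (l2 l3 : ℝ) (a : ℕ → ℝ)
    (η : Polynomial ℝ)
    (hη : η = Polynomial.C l2 * Polynomial.derivative (L p)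
        + Polynomial.C l3 * Polynomial.derivative (L (p-1)))
    (hdecomp : η = ∑ m ∈ Finset.Icc 1 p, Polynomial.C (a m) * (L m + L (m-1)))
    (hη0 : η.eval (-1) = 0) (hηne : η ≠ 0) :
    l2 = l3 * ((p:ℝ)-1)/((p:ℝ)+1) ∧
    (l3 = 1 →
      (2*η.eval 1 - 3*a p)^2
          + (p:ℝ)^2 * (-4 * (∫ x in (-1:ℝ)..1, (η.eval x)^2) + 9*(a p)^2/(2*(p:ℝ)+1))
        = -4*((p:ℝ)-1)*(p:ℝ)^2*((p:ℝ)^2+1)/((p:ℝ)+1) ∧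
      (2*η.eval 1 - 3*a p)^2
          + (p:ℝ)^2 * (-4 * (∫ x in (-1:ℝ)..1, (η.eval x)^2) + 9*(a p)^2/(2*(p:ℝ)+1))
        < 0) := by
  have hap : a p = 0 := ap_zero p hp l2 l3 a η hη hdecomp
  obtain ⟨m, rfl⟩ : ∃ m, p = m + 1 := ⟨p - 1, by omega⟩
  simp only [Nat.add_sub_cancel] at hη hap
  have hm2 : (2:ℝ) ≤ (m:ℝ) := by exact_mod_cast (by omega : 2 ≤ m)
  have hm0 : ((m:ℝ)+2) ≠ 0 := by positivity
  have hm1 : ((m:ℝ)+1) ≠ 0 := by positivity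
  have hsq : ((-1:ℝ))^m * (-1)^m = 1 := by
    rw [← pow_add]; exact Even.neg_one_pow ⟨m, rfl⟩
  -- equation from η(-1) = 0
  have he : l2 * ((-1:ℝ)^(m+1+1) * ((↑(m+1):ℝ)*((↑(m+1):ℝ)+1)/2))
      + l3 * ((-1:ℝ)^(m+1) * ((m:ℝ)*((m:ℝ)+1)/2)) = 0 := by
    rw [hη] at hη0
    simpa [dL_eval_neg_one] using hη0
  push_cast at he
  have h' := congrArg (fun t => (-1:ℝ)^m * t) he
  simp only [mul_zero] at h'
  have he2 : l2 * (((m:ℝ)+1)*((m:ℝ)+2)/2) = l3 * ((m:ℝ)*((m:ℝ)+1)/2) := by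
    linear_combination h' - (l2 * (((m:ℝ)+1)*((m:ℝ)+2)/2) - l3 * ((m:ℝ)*((m:ℝ)+1)/2)) * hsq
  have hkey : ((m:ℝ)+1) * (l2 * ((m:ℝ)+2) - l3 * (m:ℝ)) = 0 := by
    linear_combination 2 * he2
  have h0 : l2 * ((m:ℝ)+2) - l3 * (m:ℝ) = 0 :=
    (mul_eq_zero.mp hkey).resolve_left hm1
  have hl2 : l2 = l3 * (m:ℝ) / ((m:ℝ)+2) := by
    field_simp
    linarith
  constructor
  · rw [hl2]; push_cast; ring_nf
  · intro hl3
    subst hl3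
    -- η(1)
    have hE1 : η.eval 1 = (m:ℝ)*((m:ℝ)+1) := by
      rw [hη]
      simp only [eval_add, eval_mul, eval_C, dL_eval_one]
      push_cast
      rw [hl2]
      field_simp
      ring
    -- integral
    have hsqp : η^2 = C (l2*l2) * (derivative (L (m+1)) * derivative (L (m+1)))
        + (C (2*(l2*1)) * (derivative (L (m+1)) * derivative (L m))
        + C ((1:ℝ)*1) * (derivative (L m) * derivative (L m))) := by
      rw [hη]
      simp only [map_mul, map_ofNat, map_one]
      ring
    have hInt : (∫ x in (-1:ℝ)..1, (η.eval x)^2)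
        = l2*l2 * ((↑m+1)*(↑m+2)) + ((m:ℝ)*((m:ℝ)+1)) := by
      have : (∫ x in (-1:ℝ)..1, (η.eval x)^2) = intP (η^2) := by
        simp only [intP, eval_pow]
      rw [this, hsqp, intP_add, intP_add, intP_Cmul, intP_Cmul, intP_Cmul,
        intP_dL_sq (m+1) (by omega), intP_dL_cross m (by omega),
        intP_dL_sq m (by omega)]
      push_cast
      ring
    rw [hE1, hap, hInt]
    have hEq : (2*((m:ℝ)*((m:ℝ)+1)) - 3*0)^2
        + (↑(m+1):ℝ)^2 * (-4 * (l2*l2 * ((↑m+1)*(↑m+2)) + ((m:ℝ)*((m:ℝ)+1))) + 9*0^2/(2*(↑(m+1):ℝ)+1))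
        = -4*((↑(m+1):ℝ)-1)*(↑(m+1):ℝ)^2*((↑(m+1):ℝ)^2+1)/((↑(m+1):ℝ)+1) := by
      push_cast
      rw [hl2]
      field_simp
      ring
    refine ⟨hEq, ?_⟩
    rw [hEq]
    push_cast
    apply div_neg_of_neg_of_pos
    · nlinarith [hm2]
    · linarith
end
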